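/- arXiv:math/0107035 — 5 statements merged into one kernel-verified Lean document; each statement's English description precedes it below -/
import Mathlib

section
/- Let κ > 1, let n ≥ 1 be an integer, let A ≥ 0, and let r : ℤ → (0,∞) satisfy the (κ,n,A)-flaring property (with J = ℤ). If j₀ ∈ ℤ satisfies r_{j₀} > A, then there exists ε ∈ {−1, +1} such that for every integer k ≥ 1, r_{j₀ + εkn} ≥ κ^k · r_{j₀}. -/
lemma flare_aux (κ : ℝ) (hκ : 1 < κ) (n : ℤ) (A : ℝ)
    (r : ℤ → ℝ) (hpos : ∀ j : ℤ, 0 < r j)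
    (hflare : ∀ j : ℤ, A < r j → κ * r j ≤ max (r (j - n)) (r (j + n)))
    (j₀ : ℤ) (hj₀ : A < r j₀) (ε : ℤ) (hε : ε = 1 ∨ ε = -1)
    (h1 : κ * r j₀ ≤ r (j₀ + ε * n)) :
    ∀ k : ℕ, 1 ≤ k → κ ^ k * r j₀ ≤ r (j₀ + ε * (k : ℤ) * n) := by
  have hκ0 : (0:ℝ) < κ := lt_trans one_pos hκ
  have main : ∀ k : ℕ,
      κ ^ (k+1) * r j₀ ≤ r (j₀ + ε * ((k:ℤ)+1) * n) ∧
      κ * r (j₀ + ε * (k:ℤ) * n) ≤ r (j₀ + ε * ((k:ℤ)+1) * n) := by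
    intro k
    induction k with
    | zero =>
        constructor
        · simpa [pow_one] using h1
        · simpa using h1
    | succ k IH =>
        obtain ⟨h1k, h2k⟩ := IH
        have hκp : (1:ℝ) ≤ κ ^ (k+1) := one_le_pow₀ hκ.le
        have hrm : r j₀ ≤ r (j₀ + ε * ((k:ℤ)+1) * n) := by
          nlinarith [hpos j₀]
        have hAm : A < r (j₀ + ε * ((k:ℤ)+1) * n) := lt_of_lt_of_le hj₀ hrm
        have hf := hflare _ hAm
        have hprev : r (j₀ + ε * (k:ℤ) * n) < κ * r (j₀ + ε * ((k:ℤ)+1) * n) := by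
          nlinarith [hpos (j₀ + ε * (k:ℤ) * n), hpos (j₀ + ε * ((k:ℤ)+1) * n)]
        have hmax : κ * r (j₀ + ε * ((k:ℤ)+1) * n) ≤ r (j₀ + ε * ((k:ℤ)+2) * n) := by
          rcases hε with he | he
          · subst he
            have e1 : (j₀ + 1 * ((k:ℤ)+1) * n) - n = j₀ + 1 * (k:ℤ) * n := by ring
            have e2 : (j₀ + 1 * ((k:ℤ)+1) * n) + n = j₀ + 1 * ((k:ℤ)+2) * n := by ring
            rw [e1, e2] at hf
            rcases le_max_iff.mp hf with h | h
            · exact absurd h (not_le.mpr hprev)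
            · exact h
          · subst he
            have e1 : (j₀ + (-1) * ((k:ℤ)+1) * n) - n = j₀ + (-1) * ((k:ℤ)+2) * n := by ring
            have e2 : (j₀ + (-1) * ((k:ℤ)+1) * n) + n = j₀ + (-1) * (k:ℤ) * n := by ring
            rw [e1, e2] at hf
            rcases le_max_iff.mp hf with h | h
            · exact h
            · exact absurd h (not_le.mpr hprev)
        have e1 : j₀ + ε * ((↑(k+1):ℤ)+1) * n = j₀ + ε * ((k:ℤ)+2) * n := by
          push_cast; ring
        have e2 : j₀ + ε * (↑(k+1):ℤ) * n = j₀ + ε * ((k:ℤ)+1) * n := by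
          push_cast; ring
        constructor
        · have heq : κ ^ (k+1+1) * r j₀ = κ * (κ ^ (k+1) * r j₀) := by ring
          rw [heq, e1]
          have : κ * (κ ^ (k+1) * r j₀) ≤ κ * r (j₀ + ε * ((k:ℤ)+1) * n) :=
            mul_le_mul_of_nonneg_left h1k hκ0.le
          linarith [hmax]
        · rw [e1, e2]; exact hmax
  intro k hk
  obtain ⟨m, rfl⟩ : ∃ m, k = m + 1 := ⟨k - 1, by omega⟩
  have := (main m).1
  push_cast
  push_cast at this
  exact this

/-- If `r : ℤ → (0,∞)` satisfies the `(κ,n,A)`-flaring property (with `J = ℤ`)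
and `r j₀ > A`, then there is a direction `ε ∈ {−1,+1}` such that
`r (j₀ + ε·k·n) ≥ κ^k · r j₀` for all integers `k ≥ 1`. -/
theorem flaring_exponential_growth
    (κ : ℝ) (hκ : 1 < κ) (n : ℤ) (hn : 1 ≤ n) (A : ℝ) (hA : 0 ≤ A)
    (r : ℤ → ℝ) (hpos : ∀ j : ℤ, 0 < r j)
    (hflare : ∀ j : ℤ, A < r j → κ * r j ≤ max (r (j - n)) (r (j + n)))
    (j₀ : ℤ) (hj₀ : A < r j₀) :
    ∃ ε : ℤ, (ε = 1 ∨ ε = -1) ∧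
      ∀ k : ℕ, 1 ≤ k → κ ^ k * r j₀ ≤ r (j₀ + ε * (k : ℤ) * n) := by
  have h0 := hflare j₀ hj₀
  rcases le_max_iff.mp h0 with h | h
  · refine ⟨-1, Or.inr rfl, ?_⟩
    have h1 : κ * r j₀ ≤ r (j₀ + (-1) * n) := by
      have : j₀ - n = j₀ + (-1) * n := by ring
      rwa [this] at h
    exact flare_aux κ hκ n A r hpos hflare j₀ hj₀ (-1) (Or.inr rfl) h1
  · refine ⟨1, Or.inl rfl, ?_⟩
    have h1 : κ * r j₀ ≤ r (j₀ + 1 * n) := by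
      have : j₀ + n = j₀ + 1 * n := by ring
      rwa [this] at h
    exact flare_aux κ hκ n A r hpos hflare j₀ hj₀ 1 (Or.inl rfl) h1
end

section
/- Let κ > 1, let n ≥ 1 be an integer, let A ≥ 0, L ≥ 1, and let r : ℤ → (0,∞) satisfy both the (κ,n,A)-flaring property and the L-Lipschitz growth condition (with J = ℤ). If j₀ ∈ ℤ satisfies r_{j₀} > A, then, setting κ' = κ^{1/n}, there exists ε ∈ {−1, +1} such that for every integer m ≥ 1, r_{j₀ + εm} ≥ L^{−n} · κ'^{m} · r_{j₀}. -/
/-!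
Flaring at `j₀` picks a direction `ε` in which `r` grows by a factor `κ` over one step of
length `n`. Along the progression `j₀ + ε k n` the growth then propagates: at each new point
flaring applies again, and it cannot point backwards since the previous value is already smaller
by the factor `κ`. So `r (j₀ + ε k n) ≥ κ ^ k r j₀`. An arbitrary `j₀ + ε m` lies within distance
`n` before the next point of the progression, i.e. `k = ⌈m / n⌉`, so the Lipschitz condition costs
at most a factor `L ^ n`, while `κ ^ k ≥ κ ^ (m / n)`.
-/

theorem mul_le_succ_of_flaring {κ A : ℝ} {s : ℕ → ℝ} (hκ : 1 < κ) (hpos : ∀ k, 0 < s k)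
    (hflare : ∀ k, A < s (k + 1) → κ * s (k + 1) ≤ max (s k) (s (k + 2)))
    (h₀ : A < s 0) (h₁ : κ * s 0 ≤ s 1) (k : ℕ) : κ * s k ≤ s (k + 1) := by
  suffices ∀ k, A < s k ∧ κ * s k ≤ s (k + 1) from (this k).2
  intro k
  induction k with
  | zero => exact ⟨h₀, h₁⟩
  | succ k ih =>
    obtain ⟨hA, hstep⟩ := ih
    have hlt : s k < s (k + 1) := (lt_mul_of_one_lt_left (hpos k) hκ).trans_le hstep
    have hback : s k < κ * s (k + 1) := hlt.trans (lt_mul_of_one_lt_left (hpos (k + 1)) hκ)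
    exact ⟨hA.trans hlt,
      (le_max_iff.mp (hflare k (hA.trans hlt))).resolve_left hback.not_ge⟩

theorem exists_sign_pow_mul_le_of_flaring {κ A : ℝ} {n : ℤ} {r : ℤ → ℝ} (hκ : 1 < κ)
    (hpos : ∀ j, 0 < r j) (hflare : ∀ j, A < r j → κ * r j ≤ max (r (j - n)) (r (j + n)))
    {j₀ : ℤ} (hj₀ : A < r j₀) :
    ∃ ε : ℤ, (ε = 1 ∨ ε = -1) ∧ ∀ k : ℕ, κ ^ k * r j₀ ≤ r (j₀ + ε * (k * n)) := by
  obtain ⟨ε, hε, h₁⟩ : ∃ ε : ℤ, (ε = 1 ∨ ε = -1) ∧ κ * r j₀ ≤ r (j₀ + ε * n) := by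
    rcases le_max_iff.mp (hflare j₀ hj₀) with h | h
    · exact ⟨-1, Or.inr rfl, by simpa [sub_eq_add_neg] using h⟩
    · exact ⟨1, Or.inl rfl, by simpa using h⟩
  have hflareε : ∀ j, A < r j → κ * r j ≤ max (r (j - ε * n)) (r (j + ε * n)) := by
    rcases hε with rfl | rfl
    · simpa using hflare
    · simpa [← sub_eq_add_neg, max_comm] using hflare
  have hstep := mul_le_succ_of_flaring (s := fun k : ℕ => r (j₀ + ε * (k * n))) hκ
    (fun _ => hpos _) (fun i hA => by convert hflareε _ hA using 3 <;> push_cast <;> ring)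
    (by simpa using hj₀) (by simpa using h₁)
  exact ⟨ε, hε, fun k => by simpa using geom_le (by positivity) k fun i _ => hstep i⟩

theorem le_zpow_abs_sub_mul_of_lipschitz {L : ℝ} {r : ℤ → ℝ} (hL : 0 ≤ L)
    (hlip : ∀ j k : ℤ, |j - k| = 1 → r j ≤ L * r k) (j k : ℤ) : r j ≤ L ^ |j - k| * r k := by
  rw [← Int.natCast_natAbs, zpow_natCast]
  induction h : (j - k).natAbs generalizing j with
  | zero => simp [show j = k by omega]
  | succ d ih =>
    obtain ⟨j', hjj', hj'⟩ : ∃ j', |j - j'| = 1 ∧ (j' - k).natAbs = d := by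
      rcases lt_or_gt_of_ne (show j ≠ k by omega) with hjk | hjk
      · exact ⟨j + 1, by simp, by omega⟩
      · exact ⟨j - 1, by simp, by omega⟩
    calc r j ≤ L * r j' := hlip j j' hjj'
      _ ≤ L * (L ^ d * r k) := mul_le_mul_of_nonneg_left (ih j' hj') hL
      _ = L ^ (d + 1) * r k := by ring

theorem exists_nat_mul_mem_Ico (m : ℕ) {n : ℤ} (hn : 0 < n) :
    ∃ k : ℕ, (m : ℤ) ≤ k * n ∧ k * n < m + n := by
  have hn' : (0 : ℝ) < n := by exact_mod_cast hn
  refine ⟨⌈(m : ℝ) / n⌉₊, ?_, ?_⟩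
  · have := Nat.le_ceil ((m : ℝ) / n)
    rw [div_le_iff₀ hn'] at this
    exact_mod_cast this
  · have := Nat.ceil_lt_add_one (div_nonneg m.cast_nonneg hn'.le)
    have := mul_lt_mul_of_pos_right this hn'
    rw [add_mul, div_mul_cancel₀ _ hn'.ne', one_mul] at this
    exact_mod_cast this

theorem rpow_one_div_pow_le_pow {κ n : ℝ} (hκ : 1 ≤ κ) (hn : 0 < n) {m k : ℕ}
    (h : (m : ℝ) ≤ k * n) : (κ ^ (1 / n)) ^ m ≤ κ ^ k := by
  rw [← Real.rpow_mul_natCast (by linarith), ← Real.rpow_natCast]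
  exact Real.rpow_le_rpow_of_exponent_le hκ (by rwa [one_div_mul_eq_div, div_le_iff₀ hn])

theorem flaring_full_exponential_growth_general
    (κ : ℝ) (hκ : 1 < κ) (n : ℤ) (hn : 1 ≤ n) (A : ℝ)
    (L : ℝ) (hL : 1 ≤ L)
    (r : ℤ → ℝ) (hpos : ∀ j : ℤ, 0 < r j)
    (hflare : ∀ j : ℤ, A < r j → κ * r j ≤ max (r (j - n)) (r (j + n)))
    (hlip : ∀ j k : ℤ, |j - k| = 1 → r j ≤ L * r k)
    (j₀ : ℤ) (hj₀ : A < r j₀) :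
    ∃ ε : ℤ, (ε = 1 ∨ ε = -1) ∧
      ∀ m : ℕ, 1 ≤ m →
        L ^ (-n) * (κ ^ ((1 : ℝ) / (n : ℝ))) ^ m * r j₀ ≤ r (j₀ + ε * (m : ℤ)) := by
  obtain ⟨ε, hε, hgrowth⟩ := exists_sign_pow_mul_le_of_flaring hκ hpos hflare hj₀
  refine ⟨ε, hε, fun m _ => ?_⟩
  obtain ⟨k, hmk, hkm⟩ := exists_nat_mul_mem_Ico m (by omega : 0 < n)
  have hdist : |j₀ + ε * (k * n) - (j₀ + ε * m)| ≤ n := by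
    rw [abs_le]
    rcases hε with rfl | rfl <;> constructor <;> linarith
  have hκpow : (κ ^ ((1 : ℝ) / n)) ^ m ≤ κ ^ k :=
    rpow_one_div_pow_le_pow hκ.le (by exact_mod_cast hn) (by exact_mod_cast hmk)
  have hL₀ : 0 < L := by linarith
  calc L ^ (-n) * (κ ^ ((1 : ℝ) / n)) ^ m * r j₀
      ≤ L ^ (-n) * (κ ^ k * r j₀) := by
        rw [mul_assoc]; gcongr; exact (hpos j₀).le
    _ ≤ L ^ (-n) * r (j₀ + ε * (k * n)) := by gcongr; exact hgrowth k
    _ ≤ L ^ (-n) * (L ^ n * r (j₀ + ε * m)) := by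
        gcongr
        calc r (j₀ + ε * (k * n)) ≤ L ^ |j₀ + ε * (k * n) - (j₀ + ε * m)| * r (j₀ + ε * m) :=
              le_zpow_abs_sub_mul_of_lipschitz hL₀.le hlip _ _
          _ ≤ L ^ n * r (j₀ + ε * m) := by
              gcongr
              exact (hpos _).le
    _ = r (j₀ + ε * m) := by
        rw [← mul_assoc, ← zpow_add₀ hL₀.ne', neg_add_cancel, zpow_zero, one_mul]

/-- If `r : ℤ → (0,∞)` satisfies the `(κ,n,A)`-flaring property and the
`L`-Lipschitz growth condition (with `J = ℤ`), and `r j₀ > A`, then, with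
`κ' = κ^(1/n)`, there is a direction `ε ∈ {−1,+1}` such that
`r (j₀ + ε·m) ≥ L^(−n) · κ'^m · r j₀` for all integers `m ≥ 1`. -/
theorem flaring_full_exponential_growth
    (κ : ℝ) (hκ : 1 < κ) (n : ℤ) (hn : 1 ≤ n) (A : ℝ) (hA : 0 ≤ A)
    (L : ℝ) (hL : 1 ≤ L)
    (r : ℤ → ℝ) (hpos : ∀ j : ℤ, 0 < r j)
    (hflare : ∀ j : ℤ, A < r j → κ * r j ≤ max (r (j - n)) (r (j + n)))
    (hlip : ∀ j k : ℤ, |j - k| = 1 → r j ≤ L * r k)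
    (j₀ : ℤ) (hj₀ : A < r j₀) :
    ∃ ε : ℤ, (ε = 1 ∨ ε = -1) ∧
      ∀ m : ℕ, 1 ≤ m →
        L ^ (-n) * (κ ^ ((1 : ℝ) / (n : ℝ))) ^ m * r j₀ ≤ r (j₀ + ε * (m : ℤ)) :=
  flaring_full_exponential_growth_general κ hκ n hn A L hL r hpos hflare hlip j₀ hj₀
end

section
/- Let J ⊆ ℤ be order-connected, let κ > 1, let n ≥ 1 be an integer, let A ≥ 0, and let r : J → (0,∞) satisfy the (κ,n,A)-flaring property. Suppose i, i+n ∈ J, r_i > A, and r_{i+n} ≥ r_i. Then for every integer k ≥ 1 with i+(k+1)n ∈ J, one has r_{i+(k+1)n} ≥ κ · r_{i+kn}; consequently, for every integer k ≥ 1 with i+kn ∈ J, r_{i+kn} ≥ κ^{k−1} · r_{i+n}. In other words, once the sequence fails to decrease across one step of size n above the flaring threshold, it grows inexorably by factors of κ in that direction. -/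
/-- Suppose `r : J → (0,∞)` satisfies the `(κ,n,A)`-flaring property on an
order-connected set `J ⊆ ℤ`. If `i, i+n ∈ J`, `r i > A` and `r (i+n) ≥ r i`, then the
sequence grows inexorably by factors of `κ` to the right: for every `k ≥ 1` with
`i+(k+1)n ∈ J` one has `r (i+(k+1)n) ≥ κ · r (i+kn)`, and consequently for every `k ≥ 1`
with `i+kn ∈ J` one has `r (i+kn) ≥ κ^(k−1) · r (i+n)`. -/
theorem flaring_inexorable_growth
    (J : Set ℤ) (hJ : J.OrdConnected)
    (κ : ℝ) (hκ : 1 < κ) (n : ℤ) (hn : 1 ≤ n) (A : ℝ) (hA : 0 ≤ A)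
    (r : ℤ → ℝ) (hpos : ∀ j ∈ J, 0 < r j)
    (hflare : ∀ j : ℤ, j - n ∈ J → j ∈ J → j + n ∈ J → A < r j →
      κ * r j ≤ max (r (j - n)) (r (j + n)))
    (i : ℤ) (hi : i ∈ J) (hin : i + n ∈ J) (hiA : A < r i)
    (hup : r i ≤ r (i + n)) :
    (∀ k : ℕ, 1 ≤ k → i + ((k : ℤ) + 1) * n ∈ J →
      κ * r (i + (k : ℤ) * n) ≤ r (i + ((k : ℤ) + 1) * n)) ∧
    (∀ k : ℕ, 1 ≤ k → i + (k : ℤ) * n ∈ J →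
      κ ^ (k - 1) * r (i + n) ≤ r (i + (k : ℤ) * n)) := by
  -- The flaring step, given monotonicity and threshold data at stage k.
  have step : ∀ K : ℤ, 1 ≤ K → i + (K + 1) * n ∈ J →
      r (i + (K - 1) * n) ≤ r (i + K * n) → A < r (i + K * n) →
      κ * r (i + K * n) ≤ r (i + (K + 1) * n) := by
    intro K hK hmem h1 h2
    set j := i + K * n with hj
    have hjJ : j ∈ J := hJ.out hi hmem ⟨by nlinarith, by nlinarith⟩
    have hjmJ : j - n ∈ J := hJ.out hi hmem ⟨by nlinarith, by nlinarith⟩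
    have hjpJ : j + n ∈ J := by
      have : j + n = i + (K + 1) * n := by ring
      rw [this]; exact hmem
    have hjpos : 0 < r j := hpos j hjJ
    have hmax := hflare j hjmJ hjJ hjpJ h2
    have hjm : j - n = i + (K - 1) * n := by ring
    have hjp : j + n = i + (K + 1) * n := by ring
    rw [hjm, hjp] at hmax
    rcases le_max_iff.mp hmax with h | h
    · nlinarith
    · exact h
  -- main induction
  have key : ∀ k : ℕ, 1 ≤ k → i + (k : ℤ) * n ∈ J →
      r (i + ((k : ℤ) - 1) * n) ≤ r (i + (k : ℤ) * n) ∧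
      A < r (i + (k : ℤ) * n) ∧
      κ ^ (k - 1) * r (i + n) ≤ r (i + (k : ℤ) * n) := by
    intro k
    induction k with
    | zero => intro h; omega
    | succ m ih =>
      intro _ hmem
      rcases Nat.eq_zero_or_pos m with hm | hm
      · subst hm
        have e1 : i + ((0 + 1 : ℕ) : ℤ) * n = i + n := by push_cast; ring
        have e2 : i + (((0 + 1 : ℕ) : ℤ) - 1) * n = i := by push_cast; ring
        rw [e1, e2]
        norm_num
        exact ⟨hup, lt_of_lt_of_le hiA hup⟩
      · have hm1 : (1 : ℤ) ≤ (m : ℤ) := by exact_mod_cast hm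
        have hmemc : i + ((m : ℤ) + 1) * n ∈ J := by
          have : ((m + 1 : ℕ) : ℤ) = (m : ℤ) + 1 := by push_cast; ring
          rw [this] at hmem; exact hmem
        have hmJ : i + (m : ℤ) * n ∈ J := hJ.out hi hmemc ⟨by nlinarith, by nlinarith⟩
        obtain ⟨h1, h2, h3⟩ := ih hm hmJ
        have hs := step (m : ℤ) hm1 hmemc h1 h2
        have hpm : 0 < r (i + (m : ℤ) * n) := hpos _ hmJ
        have hcast : i + ((m + 1 : ℕ) : ℤ) * n = i + ((m : ℤ) + 1) * n := by
          push_cast; ring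
        have hcast2 : i + (((m + 1 : ℕ) : ℤ) - 1) * n = i + (m : ℤ) * n := by
          push_cast; ring
        rw [hcast, hcast2]
        refine ⟨by nlinarith, by nlinarith, ?_⟩
        have hms : m + 1 - 1 = (m - 1) + 1 := by omega
        rw [hms, pow_succ]
        have hin_pos : 0 < r (i + n) := hpos _ hin
        have hκ0 : (0 : ℝ) < κ := by linarith
        calc κ ^ (m - 1) * κ * r (i + n) = κ * (κ ^ (m - 1) * r (i + n)) := by ring
          _ ≤ κ * r (i + (m : ℤ) * n) := by nlinarith [pow_pos hκ0 (m - 1)]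
          _ ≤ r (i + ((m : ℤ) + 1) * n) := hs
  constructor
  · intro k hk hmem
    have hk1 : (1 : ℤ) ≤ (k : ℤ) := by exact_mod_cast hk
    have hkJ : i + (k : ℤ) * n ∈ J := hJ.out hi hmem ⟨by nlinarith, by nlinarith⟩
    obtain ⟨h1, h2, _⟩ := key k hk hkJ
    exact step (k : ℤ) hk1 hmem h1 h2
  · intro k hk hmem
    exact (key k hk hmem).2.2
end

section
/- Let J ⊆ ℤ be a nonempty order-connected set, let κ > 1, let n ≥ 1 be an integer, let L ≥ 1, and let r : J → (0,∞) satisfy the L-Lipschitz growth condition and the (κ,n,0)-flaring property. If r does not attain a minimum on J, then exactly one of the following holds: (a) J is unbounded above and r_i → 0 as i → +∞; or (b) J is unbounded below and r_i → 0 as i → −∞. -/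
/-!
Call `j` rising if `κ r j ≤ r (j + n)` and falling if `κ r j ≤ r (j - n)`; flaring makes every
interior point rising or falling. A rising point stays rising after a step `n` to the right, so
`r` grows like `κ ^ k` along `j + k n`, and the Lipschitz condition (which costs at most a factor
`L ^ n` across a gap shorter than `n`) keeps `r` above `r j` far to the right; mirror-symmetrically
for falling points. So a rising and a falling point together give a minimum on a finite window.
If no point is rising, every interior point is falling: `r` decays like `κ⁻¹ ^ k` to the right,
which forces `J` to be unbounded above (otherwise a minimum exists) and `r → 0` at `+∞`. If some
point is rising, no point is falling and the mirror image of this argument gives `r → 0` at `-∞`.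
Both cannot happen: then `J = ℤ` and `r`, tending to `0` at both ends, has a maximum, at which
flaring fails.
-/

open Filter Set Topology
open scoped Pointwise

def LipschitzGrowthOn (J : Set ℤ) (L : ℝ) (r : ℤ → ℝ) : Prop :=
  ∀ j ∈ J, ∀ k ∈ J, |j - k| = 1 → r j ≤ L * r k

def FlaringOn (J : Set ℤ) (κ : ℝ) (n : ℤ) (r : ℤ → ℝ) : Prop :=
  ∀ j : ℤ, j - n ∈ J → j ∈ J → j + n ∈ J → 0 < r j → κ * r j ≤ max (r (j - n)) (r (j + n))

def RisesAt (J : Set ℤ) (κ : ℝ) (n : ℤ) (r : ℤ → ℝ) (j : ℤ) : Prop :=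
  j ∈ J ∧ j + n ∈ J ∧ κ * r j ≤ r (j + n)

def FallsAt (J : Set ℤ) (κ : ℝ) (n : ℤ) (r : ℤ → ℝ) (j : ℤ) : Prop :=
  j ∈ J ∧ j - n ∈ J ∧ κ * r j ≤ r (j - n)

section

variable {J : Set ℤ} {κ L : ℝ} {n : ℤ} {r : ℤ → ℝ}

theorem Set.OrdConnected.neg (hJ : J.OrdConnected) : (-J).OrdConnected :=
  hJ.preimage_anti fun _ _ => neg_le_neg

theorem Set.OrdConnected.Ici_subset (hJ : J.OrdConnected) {b : ℤ} (hb : b ∈ J)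
    (hJb : ¬BddAbove J) : Ici b ⊆ J := fun t ht => by
  obtain ⟨c, hc, htc⟩ := not_bddAbove_iff.1 hJb t
  exact hJ.out hb hc ⟨ht, htc.le⟩

theorem Set.OrdConnected.Iic_subset (hJ : J.OrdConnected) {b : ℤ} (hb : b ∈ J)
    (hJb : ¬BddBelow J) : Iic b ⊆ J := fun t ht => by
  obtain ⟨c, hc, hct⟩ := not_bddBelow_iff.1 hJb t
  exact hJ.out hc hb ⟨hct.le, ht⟩

theorem LipschitzGrowthOn.comp_neg (h : LipschitzGrowthOn J L r) :
    LipschitzGrowthOn (-J) L (fun x => r (-x)) := fun j hj k hk hjk =>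
  h (-j) hj (-k) hk (by rwa [neg_sub_neg, abs_sub_comm])

theorem FlaringOn.comp_neg (h : FlaringOn J κ n r) :
    FlaringOn (-J) κ n (fun x => r (-x)) := by
  intro j hj₀ hj hj₁ hrj
  rw [Set.mem_neg, neg_sub] at hj₀
  rw [Set.mem_neg, neg_add'] at hj₁
  have := h (-j) hj₁ hj (by rwa [neg_add_eq_sub]) hrj
  simpa only [neg_sub, neg_add', max_comm, neg_add_eq_sub] using this

theorem risesAt_neg_iff {j : ℤ} :
    RisesAt (-J) κ n (fun x => r (-x)) j ↔ FallsAt J κ n r (-j) := by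
  simp only [RisesAt, FallsAt, Set.mem_neg, neg_add']

theorem exists_nat_add_mul_le_lt (hn : 0 < n) {a t : ℤ} {K : ℕ} (h : a + K * n ≤ t) :
    ∃ q : ℕ, K ≤ q ∧ a + q * n ≤ t ∧ t < a + q * n + n := by
  have hK : (K : ℤ) ≤ (t - a) / n := Int.le_ediv_of_mul_le hn (by linarith)
  refine ⟨((t - a) / n).toNat, by omega, ?_, ?_⟩ <;>
    rw [Int.toNat_of_nonneg (by omega)]
  · linarith [Int.ediv_mul_le (t - a) hn.ne']
  · linarith [Int.lt_ediv_add_one_mul_self (t - a) hn]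

theorem LipschitzGrowthOn.le_zpow_sub_mul (h : LipschitzGrowthOn J L r) (hJ : J.OrdConnected)
    (hL : 0 < L) {a b : ℤ} (ha : a ∈ J) (hb : b ∈ J) (hab : a ≤ b) :
    r b ≤ L ^ (b - a) * r a ∧ r a ≤ L ^ (b - a) * r b := by
  induction b, hab using Int.leInduction with
  | base => simp
  | succ b hab ih =>
    have hbJ : b ∈ J := hJ.out ha hb ⟨hab, by omega⟩
    obtain ⟨ih₁, ih₂⟩ := ih hbJ
    have hpow : L ^ (b + 1 - a) = L ^ (b - a) * L := by
      rw [show b + 1 - a = b - a + 1 by ring, zpow_add_one₀ hL.ne']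
    constructor
    · calc r (b + 1) ≤ L * r b := h _ hb _ hbJ (by simp)
        _ ≤ L * (L ^ (b - a) * r a) := by gcongr
        _ = L ^ (b + 1 - a) * r a := by rw [hpow]; ring
    · calc r a ≤ L ^ (b - a) * r b := ih₂
        _ ≤ L ^ (b - a) * (L * r (b + 1)) := by gcongr; exact h _ hbJ _ hb (by simp)
        _ = L ^ (b + 1 - a) * r (b + 1) := by rw [hpow]; ring

theorem LipschitzGrowthOn.le_zpow_mul_of_abs_sub_le (h : LipschitzGrowthOn J L r)
    (hJ : J.OrdConnected) (hL : 1 ≤ L) {a b : ℤ} (ha : a ∈ J) (hb : b ∈ J) (hra : 0 ≤ r a)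
    (hab : |b - a| ≤ n) : r b ≤ L ^ n * r a := by
  have hL₀ : 0 < L := by linarith
  rcases le_total a b with hle | hle
  · calc r b ≤ L ^ (b - a) * r a := (h.le_zpow_sub_mul hJ hL₀ ha hb hle).1
      _ ≤ L ^ n * r a := by
        gcongr; exact (le_abs_self _).trans hab
  · calc r b ≤ L ^ (a - b) * r a := (h.le_zpow_sub_mul hJ hL₀ hb ha hle).2
      _ ≤ L ^ n * r a := by
        gcongr; rw [← neg_sub]; exact (neg_le_abs _).trans hab

theorem FlaringOn.risesAt_add (h : FlaringOn J κ n r) (hκ : 1 < κ) (hpos : ∀ j ∈ J, 0 < r j)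
    {j : ℤ} (hj : RisesAt J κ n r j) (hj₂ : j + n + n ∈ J) : RisesAt J κ n r (j + n) := by
  obtain ⟨hj₀, hj₁, hrise⟩ := hj
  refine ⟨hj₁, hj₂, ?_⟩
  have hflare := h (j + n) (by simpa using hj₀) hj₁ hj₂ (hpos _ hj₁)
  rw [add_sub_cancel_right] at hflare
  have hback : r j < κ * r (j + n) := by nlinarith [hpos j hj₀, hpos _ hj₁]
  exact (le_max_iff.1 hflare).resolve_left hback.not_ge

theorem FlaringOn.fallsAt_of_not_risesAt (h : FlaringOn J κ n r) (hpos : ∀ j ∈ J, 0 < r j)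
    {j : ℤ} (hj₀ : j - n ∈ J) (hj : j ∈ J) (hj₁ : j + n ∈ J) (hnot : ¬RisesAt J κ n r j) :
    FallsAt J κ n r j :=
  ⟨hj, hj₀, (le_max_iff.1 (h j hj₀ hj hj₁ (hpos j hj))).resolve_right fun hrise =>
    hnot ⟨hj, hj₁, hrise⟩⟩

theorem FlaringOn.pow_mul_le_of_risesAt (h : FlaringOn J κ n r) (hJ : J.OrdConnected)
    (hκ : 1 < κ) (hn : 0 ≤ n) (hpos : ∀ j ∈ J, 0 < r j) {j : ℤ} (hj : RisesAt J κ n r j)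
    {k : ℕ} (hk : j + k * n ∈ J) : κ ^ k * r j ≤ r (j + k * n) := by
  have hmem : ∀ i ≤ k, j + i * n ∈ J := fun i hi => hJ.out hj.1 hk
    ⟨by nlinarith, by gcongr⟩
  have hrises : ∀ i < k, RisesAt J κ n r (j + i * n) := by
    intro i
    induction i with
    | zero => intro _; simpa using hj
    | succ i ih =>
      intro hi
      have := h.risesAt_add hκ hpos (ih (by omega))
        (by convert hmem (i + 2) hi using 1; push_cast; ring)
      convert this using 1; push_cast; ring
  simpa using geom_le (u := fun i : ℕ => r (j + i * n)) (by linarith) k fun i hi => by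
    convert (hrises i hi).2.2 using 2; push_cast; ring

theorem FlaringOn.eventually_atTop_le_of_risesAt (h : FlaringOn J κ n r)
    (hlip : LipschitzGrowthOn J L r) (hJ : J.OrdConnected) (hκ : 1 < κ) (hn : 0 < n)
    (hL : 1 ≤ L) (hpos : ∀ j ∈ J, 0 < r j) {j : ℤ} (hj : RisesAt J κ n r j) :
    ∀ᶠ t in atTop, t ∈ J → r j ≤ r t := by
  obtain ⟨K, hK⟩ := pow_unbounded_of_one_lt (L ^ n) hκ
  refine eventually_atTop.2 ⟨j + K * n, fun t hKt ht => ?_⟩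
  obtain ⟨q, hKq, hqt, htq⟩ := exists_nat_add_mul_le_lt hn hKt
  have hq : j + q * n ∈ J := hJ.out hj.1 ht ⟨by nlinarith, hqt⟩
  have hgrowth := h.pow_mul_le_of_risesAt hJ hκ hn.le hpos hj hq
  have hgap : r (j + q * n) ≤ L ^ n * r t :=
    hlip.le_zpow_mul_of_abs_sub_le hJ hL ht hq (hpos t ht).le
      (abs_le.2 ⟨by linarith, by linarith⟩)
  have hrj := (hpos j hj.1).le
  refine le_of_mul_le_mul_left ?_ (zpow_pos (by linarith : (0 : ℝ) < L) n)
  calc L ^ n * r j ≤ κ ^ K * r j := by gcongr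
    _ ≤ κ ^ q * r j := by gcongr; exact hκ.le
    _ ≤ L ^ n * r t := hgrowth.trans hgap

theorem FlaringOn.eventually_atBot_le_of_fallsAt (h : FlaringOn J κ n r)
    (hlip : LipschitzGrowthOn J L r) (hJ : J.OrdConnected) (hκ : 1 < κ) (hn : 0 < n)
    (hL : 1 ≤ L) (hpos : ∀ j ∈ J, 0 < r j) {j : ℤ} (hj : FallsAt J κ n r j) :
    ∀ᶠ t in atBot, t ∈ J → r j ≤ r t := by
  have := h.comp_neg.eventually_atTop_le_of_risesAt hlip.comp_neg hJ.neg hκ hn hL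
    (fun t ht => hpos (-t) ht) (risesAt_neg_iff.2 (by rwa [neg_neg]))
  exact (tendsto_neg_atBot_atTop.eventually this).mono fun t ht htJ => by
    simpa using ht (by simpa using htJ)

theorem exists_forall_le_of_eventually_le {α : Type*} [LinearOrder α] {f : ℤ → α} {x y : ℤ}
    (hx : x ∈ J) (hy : y ∈ J) (hbot : ∀ᶠ t in atBot, t ∈ J → f x ≤ f t)
    (htop : ∀ᶠ t in atTop, t ∈ J → f y ≤ f t) : ∃ i ∈ J, ∀ j ∈ J, f i ≤ f j := by
  obtain ⟨A, hA⟩ := eventually_atBot.1 hbot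
  obtain ⟨B, hB⟩ := eventually_atTop.1 htop
  obtain ⟨i, ⟨hiJ, -⟩, hi⟩ := exists_min_image (J ∩ Icc (min A (min x y)) (max B (max x y))) f
    ((finite_Icc _ _).inter_of_right J) ⟨x, hx, by omega, by omega⟩
  refine ⟨i, hiJ, fun t ht => ?_⟩
  by_cases htA : t ≤ A
  · exact (hi x ⟨hx, by omega, by omega⟩).trans (hA t htA ht)
  by_cases htB : B ≤ t
  · exact (hi y ⟨hy, by omega, by omega⟩).trans (hB t htB ht)
  exact hi t ⟨ht, by omega, by omega⟩

theorem FlaringOn.exists_forall_le_of_fallsAt_of_risesAt (h : FlaringOn J κ n r)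
    (hlip : LipschitzGrowthOn J L r) (hJ : J.OrdConnected) (hκ : 1 < κ) (hn : 0 < n)
    (hL : 1 ≤ L) (hpos : ∀ j ∈ J, 0 < r j) {x y : ℤ} (hx : FallsAt J κ n r x)
    (hy : RisesAt J κ n r y) : ∃ i ∈ J, ∀ j ∈ J, r i ≤ r j :=
  exists_forall_le_of_eventually_le hx.1 hy.1
    (h.eventually_atBot_le_of_fallsAt hlip hJ hκ hn hL hpos hx)
    (h.eventually_atTop_le_of_risesAt hlip hJ hκ hn hL hpos hy)

theorem FlaringOn.not_bddAbove_of_forall_not_risesAt (h : FlaringOn J κ n r)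
    (hlip : LipschitzGrowthOn J L r) (hJne : J.Nonempty) (hJ : J.OrdConnected) (hκ : 1 < κ)
    (hn : 0 < n) (hL : 1 ≤ L) (hpos : ∀ j ∈ J, 0 < r j)
    (hnomin : ¬∃ i ∈ J, ∀ j ∈ J, r i ≤ r j) (hnorise : ∀ j, ¬RisesAt J κ n r j) :
    ¬BddAbove J := by
  intro hJa
  obtain ⟨M, hMJ, hM⟩ := hJa.exists_isGreatest_of_nonempty hJne
  by_cases hJb : BddBelow J
  · exact hnomin (exists_min_image J r (hJb.finite_of_bddAbove hJa) hJne)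
  have hIic := hJ.Iic_subset hMJ hJb
  have hfalls : FallsAt J κ n r (M - n) :=
    h.fallsAt_of_not_risesAt hpos (hIic (by simp; omega)) (hIic (by simp; omega))
      (by simpa using hMJ) (hnorise _)
  exact hnomin (exists_forall_le_of_eventually_le hfalls.1 hMJ
    (h.eventually_atBot_le_of_fallsAt hlip hJ hκ hn hL hpos hfalls)
    (eventually_gt_atTop M |>.mono fun t hMt ht => absurd (hM ht) (by omega)))

theorem FlaringOn.tendsto_atTop_of_forall_not_risesAt (h : FlaringOn J κ n r)
    (hlip : LipschitzGrowthOn J L r) (hJne : J.Nonempty) (hJ : J.OrdConnected) (hκ : 1 < κ)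
    (hn : 0 < n) (hL : 1 ≤ L) (hpos : ∀ j ∈ J, 0 < r j) (hJa : ¬BddAbove J)
    (hnorise : ∀ j, ¬RisesAt J κ n r j) : Tendsto r atTop (𝓝 0) := by
  obtain ⟨b, hb⟩ := hJne
  have hIci := hJ.Ici_subset hb hJa
  have hmem (k : ℕ) : b + k * n ∈ J := hIci (by simp; positivity)
  have hdecay (k : ℕ) : r (b + k * n) ≤ κ⁻¹ ^ k * r b := by
    simpa using le_geom (u := fun i : ℕ => r (b + i * n)) (c := κ⁻¹) (by positivity) k
      fun i _ => by
        have hfalls : FallsAt J κ n r (b + (i + 1 : ℕ) * n) :=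
          h.fallsAt_of_not_risesAt hpos (by convert hmem i using 1; push_cast; ring)
            (hmem (i + 1)) (by convert hmem (i + 2) using 1; push_cast; ring) (hnorise _)
        have hprev : b + (i + 1 : ℕ) * n - n = b + i * n := by push_cast; ring
        rw [le_inv_mul_iff₀ (by linarith), ← hprev]
        exact hfalls.2.2
  have hLb : 0 < L ^ n * r b := by have := hpos b hb; positivity
  rw [Metric.tendsto_atTop]
  intro ε hε
  obtain ⟨K, hK⟩ := exists_pow_lt_of_lt_one (div_pos hε hLb) (inv_lt_one_of_one_lt₀ hκ)
  refine ⟨b + K * n, fun t hKt => ?_⟩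
  obtain ⟨q, hKq, hqt, htq⟩ := exists_nat_add_mul_le_lt hn hKt
  have ht : t ∈ J := hIci (by simp; nlinarith)
  rw [Real.dist_eq, sub_zero, abs_of_pos (hpos t ht)]
  calc r t ≤ L ^ n * r (b + q * n) :=
        hlip.le_zpow_mul_of_abs_sub_le hJ hL (hmem q) ht (hpos _ (hmem q)).le
          (abs_le.2 ⟨by linarith, by linarith⟩)
    _ ≤ L ^ n * (κ⁻¹ ^ q * r b) := by gcongr; exact hdecay q
    _ ≤ L ^ n * (κ⁻¹ ^ K * r b) := by
        have := (hpos b hb).le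
        gcongr L ^ n * (?_ * r b)
        exact pow_le_pow_of_le_one (by positivity) (inv_le_one_of_one_le₀ hκ.le) hKq
    _ = κ⁻¹ ^ K * (L ^ n * r b) := by ring
    _ < ε := (lt_div_iff₀ hLb).1 hK

theorem FlaringOn.not_tendsto_atTop_and_atBot (h : FlaringOn J κ n r) (hJne : J.Nonempty)
    (hJ : J.OrdConnected) (hκ : 1 < κ) (hpos : ∀ j ∈ J, 0 < r j) :
    ¬((¬BddAbove J ∧ Tendsto r atTop (𝓝 0)) ∧ (¬BddBelow J ∧ Tendsto r atBot (𝓝 0))) := by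
  rintro ⟨⟨hJa, htop⟩, hJb, hbot⟩
  obtain ⟨b, hb⟩ := hJne
  have hJuniv (t : ℤ) : t ∈ J :=
    (le_total t b).elim (hJ.Iic_subset hb hJb ·) (hJ.Ici_subset hb hJa ·)
  have hcocompact : Tendsto r (cocompact ℤ) (𝓝 0) := by
    rw [cocompact_eq_atBot_atTop]; exact hbot.sup htop
  obtain ⟨x, hx⟩ := continuous_of_discreteTopology.exists_forall_ge' b
    ((hcocompact.eventually (gt_mem_nhds (hpos b hb))).mono fun _ => le_of_lt)
  have hflare := h x (hJuniv _) (hJuniv _) (hJuniv _) (hpos x (hJuniv _))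
  nlinarith [max_le (hx (x - n)) (hx (x + n)), hpos x (hJuniv _)]

end

/-- Suppose `r : J → (0,∞)` satisfies the `L`-Lipschitz growth condition and
the `(κ,n,0)`-flaring property on a nonempty order-connected set `J ⊆ ℤ`. If `r` does not
attain a minimum on `J`, then exactly one of the following holds: `J` is unbounded above
and `r i → 0` as `i → +∞`, or `J` is unbounded below and `r i → 0` as `i → −∞`. -/
theorem no_minimum_implies_vanishing_at_one_end
    (J : Set ℤ) (hJne : J.Nonempty) (hJ : J.OrdConnected)
    (κ : ℝ) (hκ : 1 < κ) (n : ℤ) (hn : 1 ≤ n) (L : ℝ) (hL : 1 ≤ L)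
    (r : ℤ → ℝ) (hpos : ∀ j ∈ J, 0 < r j)
    (hlip : ∀ j ∈ J, ∀ k ∈ J, |j - k| = 1 → r j ≤ L * r k)
    (hflare : ∀ j : ℤ, j - n ∈ J → j ∈ J → j + n ∈ J → 0 < r j →
      κ * r j ≤ max (r (j - n)) (r (j + n)))
    (hnomin : ¬ ∃ i ∈ J, ∀ j ∈ J, r i ≤ r j) :
    Xor'
      (¬ BddAbove J ∧ Filter.Tendsto r Filter.atTop (nhds 0))
      (¬ BddBelow J ∧ Filter.Tendsto r Filter.atBot (nhds 0)) := by
  have hf : FlaringOn J κ n r := hflare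
  have hl : LipschitzGrowthOn J L r := hlip
  have hn₀ : 0 < n := by omega
  refine (xor_iff_or_and_not_and _ _).2 ⟨?_, hf.not_tendsto_atTop_and_atBot hJne hJ hκ hpos⟩
  by_cases hrises : ∃ j, RisesAt J κ n r j
  · obtain ⟨j, hj⟩ := hrises
    have hnorise : ∀ i, ¬RisesAt (-J) κ n (fun x => r (-x)) i := fun i hi =>
      hnomin (hf.exists_forall_le_of_fallsAt_of_risesAt hl hJ hκ hn₀ hL hpos
        (risesAt_neg_iff.1 hi) hj)
    have hnomin' : ¬∃ i ∈ -J, ∀ j ∈ -J, r (-i) ≤ r (-j) := fun ⟨i, hi, hmin⟩ =>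
      hnomin ⟨-i, hi, fun j hj => by simpa using hmin (-j) (by simpa using hj)⟩
    have hpos' : ∀ j ∈ -J, 0 < r (-j) := fun j hj => hpos (-j) hj
    have hJa := hf.comp_neg.not_bddAbove_of_forall_not_risesAt hl.comp_neg hJne.neg hJ.neg
      hκ hn₀ hL hpos' hnomin' hnorise
    exact Or.inr ⟨bddAbove_neg.not.1 hJa, tendsto_comp_neg_atTop_iff.1
      (hf.comp_neg.tendsto_atTop_of_forall_not_risesAt hl.comp_neg hJne.neg hJ.neg hκ hn₀ hL
        hpos' hJa hnorise)⟩
  · have hnorise := not_exists.1 hrises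
    have hJa := hf.not_bddAbove_of_forall_not_risesAt hl hJne hJ hκ hn₀ hL hpos hnomin hnorise
    exact Or.inl ⟨hJa, hf.tendsto_atTop_of_forall_not_risesAt hl hJne hJ hκ hn₀ hL hpos hJa
      hnorise⟩
end

section
/- For every κ > 1, every integer n ≥ 1, and every L ≥ 1, there exists a constant ω ≥ 0, depending only on κ, n and L, with the following property: for every order-connected J ⊆ ℤ and every r : J → (0,∞) satisfying the L-Lipschitz growth condition and the (κ,n,0)-flaring property, if r attains its minimum on J, then any two indices i, j ∈ J at which r attains its minimum satisfy |i − j| ≤ ω. (That is, the trough of such a sequence, the smallest interval containing all minima, has length at most ω.) -/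
/-- Lipschitz chaining: on an order-connected set, values grow at most
geometrically with distance. -/
lemma lip_chain (J : Set ℤ) (hJ : J.OrdConnected) (r : ℤ → ℝ) (L : ℝ) (hL : 1 ≤ L)
    (hpos : ∀ j ∈ J, 0 < r j)
    (hlip : ∀ j ∈ J, ∀ k ∈ J, |j - k| = 1 → r j ≤ L * r k) :
    ∀ d : ℕ, ∀ a ∈ J, ∀ b ∈ J, (b - a).natAbs = d → r b ≤ L ^ d * r a := by
  intro d
  induction d with
  | zero =>
    intro a ha b hb h
    have : b = a := by omega
    simp [this]
  | succ d ih =>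
    intro a ha b hb h
    rcases lt_or_ge a b with hab | hab
    · -- step down from b
      have hc : b - 1 ∈ J := hJ.out ha hb ⟨by omega, by omega⟩
      have h1 : r b ≤ L * r (b - 1) := hlip b hb (b - 1) hc (by simp)
      have h2 : r (b - 1) ≤ L ^ d * r a := ih a ha (b - 1) hc (by omega)
      calc r b ≤ L * r (b - 1) := h1
        _ ≤ L * (L ^ d * r a) := by
            exact mul_le_mul_of_nonneg_left h2 (by linarith)
        _ = L ^ (d + 1) * r a := by ring
    · -- a ≥ b; step up from b
      have hne : b < a := by omega
      have hc : b + 1 ∈ J := hJ.out hb ha ⟨by omega, by omega⟩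
      have h1 : r b ≤ L * r (b + 1) := hlip b hb (b + 1) hc (by simp)
      have h2 : r (b + 1) ≤ L ^ d * r a := ih a ha (b + 1) hc (by omega)
      calc r b ≤ L * r (b + 1) := h1
        _ ≤ L * (L ^ d * r a) := by
            exact mul_le_mul_of_nonneg_left h2 (by linarith)
        _ = L ^ (d + 1) * r a := by ring

/-- For all `κ > 1`, integer `n ≥ 1` and `L ≥ 1` there is a constant `ω ≥ 0`,
depending only on `κ, n, L`, such that for any `r : J → (0,∞)` satisfying the
`L`-Lipschitz growth condition and the `(κ,n,0)`-flaring property on an order-connected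
`J ⊆ ℤ`, any two indices at which `r` attains its minimum over `J` lie within `ω` of each
other (the trough has length at most `ω`). -/
theorem trough_bounded_length
    (κ : ℝ) (hκ : 1 < κ) (n : ℤ) (hn : 1 ≤ n) (L : ℝ) (hL : 1 ≤ L) :
    ∃ ω : ℝ, 0 ≤ ω ∧
      ∀ (J : Set ℤ), J.OrdConnected →
        ∀ r : ℤ → ℝ, (∀ j ∈ J, 0 < r j) →
          (∀ j ∈ J, ∀ k ∈ J, |j - k| = 1 → r j ≤ L * r k) →
          (∀ j : ℤ, j - n ∈ J → j ∈ J → j + n ∈ J → 0 < r j →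
            κ * r j ≤ max (r (j - n)) (r (j + n))) →
          ∀ i ∈ J, ∀ j ∈ J,
            (∀ k ∈ J, r i ≤ r k) → (∀ k ∈ J, r j ≤ r k) →
            ((|i - j| : ℤ) : ℝ) ≤ ω := by
  obtain ⟨t0, ht0⟩ := pow_unbounded_of_one_lt (L ^ n.toNat) hκ
  refine ⟨((2 * (t0 : ℤ) * n : ℤ) : ℝ), by positivity, ?_⟩
  intro J hJ r hpos hlip hflare i hi j hj hmi hmj
  have hκ0 : (0 : ℝ) < κ := by linarith
  -- main claim for ordered pairs of minima
  have key : ∀ a ∈ J, ∀ b ∈ J, (∀ k ∈ J, r a ≤ r k) → (∀ k ∈ J, r b ≤ r k) →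
      a ≤ b → b - a ≤ 2 * (t0 : ℤ) * n := by
    intro a ha b hb hma hmb hab
    by_contra hcon
    push_neg at hcon
    have hsub : Set.Icc a b ⊆ J := hJ.out ha hb
    have hba : r b = r a := le_antisymm (hmb a ha) (hma b hb)
    have hra : 0 < r a := hpos a ha
    set C : ℝ := L ^ n.toNat * r a with hC
    -- base bound: r ≤ C on [a,b]
    have hbase : ∀ k, a ≤ k → k ≤ b → r k ≤ C := by
      obtain ⟨p, hp, hpmax⟩ := Finset.exists_max_image (Finset.Icc a b) r
        ⟨a, by simp [hab]⟩
      simp only [Finset.mem_Icc] at hp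
      have hpJ : p ∈ J := hsub ⟨hp.1, hp.2⟩
      have hpC : r p ≤ C := by
        by_cases hmid : a ≤ p - n ∧ p + n ≤ b
        · -- flaring contradiction
          have h1 : p - n ∈ J := hsub ⟨hmid.1, by omega⟩
          have h2 : p + n ∈ J := hsub ⟨by omega, hmid.2⟩
          have hf := hflare p h1 hpJ h2 (hpos p hpJ)
          have hm1 : r (p - n) ≤ r p := hpmax _ (by simp only [Finset.mem_Icc]; omega)
          have hm2 : r (p + n) ≤ r p := hpmax _ (by simp only [Finset.mem_Icc]; omega)
          have : κ * r p ≤ r p := le_trans hf (max_le hm1 hm2)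
          nlinarith [hpos p hpJ]
        · -- p is within n of an endpoint
          rcases not_and_or.mp hmid with hleft | hright
          · have hd : (p - a).natAbs ≤ n.toNat := by omega
            have := lip_chain J hJ r L hL hpos hlip (p - a).natAbs a ha p hpJ rfl
            calc r p ≤ L ^ (p - a).natAbs * r a := this
              _ ≤ L ^ n.toNat * r a := by
                  exact mul_le_mul_of_nonneg_right (pow_le_pow_right₀ hL hd) hra.le
          · have hd : (p - b).natAbs ≤ n.toNat := by omega
            have := lip_chain J hJ r L hL hpos hlip (p - b).natAbs b hb p hpJ rfl
            calc r p ≤ L ^ (p - b).natAbs * r b := this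
              _ ≤ L ^ n.toNat * r a := by
                  rw [hba]
                  exact mul_le_mul_of_nonneg_right (pow_le_pow_right₀ hL hd) hra.le
      intro k hk1 hk2
      exact le_trans (hpmax k (by simp only [Finset.mem_Icc]; exact ⟨hk1, hk2⟩)) hpC
    -- flaring induction
    have hstep : ∀ t : ℕ, ∀ k, a + (t : ℤ) * n ≤ k → k ≤ b - (t : ℤ) * n →
        r k ≤ C / κ ^ t := by
      intro t
      induction t with
      | zero => intro k h1 h2; simpa using hbase k (by omega) (by omega)
      | succ t ih =>
        intro k h1 h2
        have htn : (0 : ℤ) ≤ (t : ℤ) * n := by positivity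
        have hb1 : a + (t : ℤ) * n ≤ k - n := by push_cast at h1 ⊢; linarith
        have hb2 : k - n ≤ b - (t : ℤ) * n := by push_cast at h2 ⊢; linarith
        have hb3 : a + (t : ℤ) * n ≤ k + n := by push_cast at h1 ⊢; linarith
        have hb4 : k + n ≤ b - (t : ℤ) * n := by push_cast at h2 ⊢; linarith
        have hk1 : k - n ∈ J := hsub ⟨by omega, by omega⟩
        have hk2 : k ∈ J := hsub ⟨by omega, by omega⟩
        have hk3 : k + n ∈ J := hsub ⟨by omega, by omega⟩
        have hf := hflare k hk1 hk2 hk3 (hpos k hk2)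
        have hmax : max (r (k - n)) (r (k + n)) ≤ C / κ ^ t :=
          max_le (ih _ hb1 hb2) (ih _ hb3 hb4)
        have : κ * r k ≤ C / κ ^ t := le_trans hf hmax
        rw [pow_succ, ← div_div]
        rw [le_div_iff₀ hκ0]
        linarith
    -- apply at k = a + t0 * n
    have hk1 : a + (t0 : ℤ) * n ≤ a + (t0 : ℤ) * n := le_refl _
    have hk2 : a + (t0 : ℤ) * n ≤ b - (t0 : ℤ) * n := by linarith
    have hrk := hstep t0 (a + (t0 : ℤ) * n) hk1 hk2
    have htn0 : (0:ℤ) ≤ (t0 : ℤ) * n := by positivity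
    have hkJ : a + (t0 : ℤ) * n ∈ J := hsub ⟨by omega, by omega⟩
    have hmin := hma _ hkJ
    have hlt : C / κ ^ t0 < r a := by
      rw [div_lt_iff₀ (by positivity)]
      calc C = L ^ n.toNat * r a := hC
        _ < κ ^ t0 * r a := by exact mul_lt_mul_of_pos_right ht0 hra
        _ = r a * κ ^ t0 := by ring
    linarith
  have htn0 : (0:ℤ) ≤ 2 * (t0 : ℤ) * n := by positivity
  rcases le_total i j with hij | hij
  · have := key i hi j hj hmi hmj hij
    have habs : |i - j| ≤ 2 * (t0 : ℤ) * n := by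
      rw [abs_of_nonpos (by omega)]; omega
    exact_mod_cast habs
  · have := key j hj i hi hmj hmi hij
    have habs : |i - j| ≤ 2 * (t0 : ℤ) * n := by
      rw [abs_of_nonneg (by omega)]; omega
    exact_mod_cast habs
end
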